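/- Let R = ℤ[s1, s2, s3, s12, s13, s23, s123], let I be the ideal generated by the Bullock–Przytycki relation rel (as above), and define the weighted degree by weights 2,2,1,2,3,3,3 on s1,s2,s3,s12,s13,s23,s123 respectively. For any two exponent vectors u, v ∈ ℕ^7, each with u12·u13·u23 = 0 and v12·v13·v23 = 0, the product s^u · s^v is congruent modulo I to a ℤ-linear combination of monomials s^w with w12·w13·w23 = 0 and weighted degree at most deg(s^u) + deg(s^v). -/
import Mathlib

open MvPolynomial

/-- Variables: `X 0 = s1`, `X 1 = s2`, `X 2 = s3`, `X 3 = s12`, `X 4 = s13`, `X 5 = s23`,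
`X 6 = s123`. The Bullock–Przytycki relation for the skein algebra of the four-holed
sphere at `q = 1`. -/
noncomputable def bpRel : MvPolynomial (Fin 7) ℤ :=
  X 3 * X 4 * X 5 -
    (X 3 ^ 2 + X 4 ^ 2 + X 5 ^ 2
      + X 3 * (X 0 * X 1 + X 2 * X 6) + X 4 * (X 0 * X 2 + X 1 * X 6)
      + X 5 * (X 1 * X 2 + X 0 * X 6)
      + X 0 * X 1 * X 2 * X 6 + X 0 ^ 2 + X 1 ^ 2 + X 2 ^ 2 + X 6 ^ 2 - 4)

/-- Weighted degree: weights 2,2,1,2,3,3,3 on `s1,s2,s3,s12,s13,s23,s123`. -/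
def wdeg (u : Fin 7 → ℕ) : ℕ :=
  2 * (u 0 + u 1) + u 2 + 2 * u 3 + 3 * (u 4 + u 5 + u 6)

noncomputable def mono (w : Fin 7 → ℕ) : MvPolynomial (Fin 7) ℤ := ∏ i, X i ^ w i

lemma mono_add (a b : Fin 7 → ℕ) : mono (a + b) = mono a * mono b := by
  simp [mono, pow_add, Finset.prod_mul_distrib]

lemma wdeg_add (a b : Fin 7 → ℕ) : wdeg (a + b) = wdeg a + wdeg b := by
  simp [wdeg, Pi.add_apply]; ring

def okSet (d : ℕ) : Set (MvPolynomial (Fin 7) ℤ) :=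
  {p | ∃ x, (x 3 * x 4 * x 5 = 0 ∧ wdeg x ≤ d) ∧ p = mono x}

noncomputable def N (d : ℕ) : Submodule ℤ (MvPolynomial (Fin 7) ℤ) :=
  Submodule.span ℤ (okSet d) ⊔ (Ideal.span {bpRel}).restrictScalars ℤ

lemma N_mono {d d' : ℕ} (h : d ≤ d') : N d ≤ N d' := by
  apply sup_le_sup_right
  apply Submodule.span_mono
  rintro p ⟨x, ⟨h1, h2⟩, rfl⟩
  exact ⟨x, ⟨h1, h2.trans h⟩, rfl⟩

lemma base_mem {w : Fin 7 → ℕ} (h : w 3 * w 4 * w 5 = 0) : mono w ∈ N (wdeg w) :=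
  (le_sup_left : _ ≤ N (wdeg w)) (Submodule.subset_span ⟨w, ⟨h, le_refl _⟩, rfl⟩)

lemma vec7_0 (a b c d e f g : ℕ) : ![a,b,c,d,e,f,g] 0 = a := rfl
lemma vec7_1 (a b c d e f g : ℕ) : ![a,b,c,d,e,f,g] 1 = b := rfl
lemma vec7_2 (a b c d e f g : ℕ) : ![a,b,c,d,e,f,g] 2 = c := rfl
lemma vec7_3 (a b c d e f g : ℕ) : ![a,b,c,d,e,f,g] 3 = d := rfl
lemma vec7_4 (a b c d e f g : ℕ) : ![a,b,c,d,e,f,g] 4 = e := rfl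
lemma vec7_5 (a b c d e f g : ℕ) : ![a,b,c,d,e,f,g] 5 = f := rfl
lemma vec7_6 (a b c d e f g : ℕ) : ![a,b,c,d,e,f,g] 6 = g := rfl

lemma key : mono ![0,0,0,1,1,1,0] = bpRel
    + (mono ![0,0,0,2,0,0,0] + mono ![0,0,0,0,2,0,0] + mono ![0,0,0,0,0,2,0]
    + mono ![1,1,0,1,0,0,0] + mono ![0,0,1,1,0,0,1]
    + mono ![1,0,1,0,1,0,0] + mono ![0,1,0,0,1,0,1]
    + mono ![0,1,1,0,0,1,0] + mono ![1,0,0,0,0,1,1]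
    + mono ![1,1,1,0,0,0,1] + mono ![2,0,0,0,0,0,0] + mono ![0,2,0,0,0,0,0]
    + mono ![0,0,2,0,0,0,0] + mono ![0,0,0,0,0,0,2]) - (4:ℤ) • mono 0 := by
  simp only [mono, bpRel, Fin.prod_univ_seven, vec7_0, vec7_1, vec7_2, vec7_3, vec7_4,
    vec7_5, vec7_6, Pi.zero_apply, zsmul_eq_mul, Int.cast_ofNat, pow_zero, pow_one,
    one_mul, mul_one]
  ring

lemma main : ∀ n, ∀ w : Fin 7 → ℕ, w 3 + w 4 + w 5 ≤ n → mono w ∈ N (wdeg w) := by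
  intro n
  induction n with
  | zero =>
    intro w hw
    have h3 : w 3 = 0 := by omega
    exact base_mem (by simp [h3])
  | succ n ih =>
    intro w hw
    by_cases h : w 3 * w 4 * w 5 = 0
    · exact base_mem h
    · have h3 : w 3 ≠ 0 := fun h0 => h (by simp [h0])
      have h4 : w 4 ≠ 0 := fun h0 => h (by simp [h0])
      have h5 : w 5 ≠ 0 := fun h0 => h (by simp [h0])
      set w' : Fin 7 → ℕ := fun i => w i - ![0,0,0,1,1,1,0] i with hw'def
      have e3 : w' 3 = w 3 - 1 := rfl
      have e4 : w' 4 = w 4 - 1 := rfl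
      have e5 : w' 5 = w 5 - 1 := rfl
      have hle : ∀ i, ![0,0,0,1,1,1,0] i ≤ w i := by
        intro i
        fin_cases i
        · exact Nat.zero_le _
        · exact Nat.zero_le _
        · exact Nat.zero_le _
        · exact Nat.one_le_iff_ne_zero.mpr h3
        · exact Nat.one_le_iff_ne_zero.mpr h4
        · exact Nat.one_le_iff_ne_zero.mpr h5
        · exact Nat.zero_le _
      have hw' : w = w' + ![0,0,0,1,1,1,0] := by
        funext i
        have := hle i
        simp only [hw'def, Pi.add_apply]
        omega
      have step : ∀ m : Fin 7 → ℕ, m 3 + m 4 + m 5 ≤ 2 → wdeg m ≤ 8 →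
          mono (w' + m) ∈ N (wdeg w) := by
        intro m h1 h2
        have htrio : (w' + m) 3 + (w' + m) 4 + (w' + m) 5 ≤ n := by
          simp only [Pi.add_apply, e3, e4, e5]
          omega
        have hdeg : wdeg (w' + m) ≤ wdeg w := by
          have hww : wdeg w = wdeg w' + wdeg ![0,0,0,1,1,1,0] := by rw [hw', wdeg_add]
          have h8 : wdeg ![0,0,0,1,1,1,0] = 8 := by decide
          rw [wdeg_add]
          omega
        exact N_mono hdeg (ih (w' + m) htrio)
      have hideal : mono w' * bpRel ∈ N (wdeg w) := by
        apply (le_sup_right : _ ≤ N (wdeg w))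
        exact Ideal.mul_mem_left _ _ (Ideal.subset_span rfl)
      have heq : mono w = mono w' * bpRel
          + (mono (w' + ![0,0,0,2,0,0,0]) + mono (w' + ![0,0,0,0,2,0,0])
          + mono (w' + ![0,0,0,0,0,2,0])
          + mono (w' + ![1,1,0,1,0,0,0]) + mono (w' + ![0,0,1,1,0,0,1])
          + mono (w' + ![1,0,1,0,1,0,0]) + mono (w' + ![0,1,0,0,1,0,1])
          + mono (w' + ![0,1,1,0,0,1,0]) + mono (w' + ![1,0,0,0,0,1,1])
          + mono (w' + ![1,1,1,0,0,0,1]) + mono (w' + ![2,0,0,0,0,0,0])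
          + mono (w' + ![0,2,0,0,0,0,0])
          + mono (w' + ![0,0,2,0,0,0,0]) + mono (w' + ![0,0,0,0,0,0,2]))
          - (4:ℤ) • mono (w' + 0) := by
        have h0 : mono w = mono w' * mono ![0,0,0,1,1,1,0] := by rw [hw', mono_add]
        rw [h0, key]
        simp only [mul_add, mul_sub, ← mono_add, mul_smul_comm]
      rw [heq]
      refine sub_mem ?_ (Submodule.smul_mem _ _ (step 0 (by decide) (by decide)))
      refine add_mem hideal ?_
      repeat' apply add_mem
      all_goals exact step _ (by decide) (by decide)

theorem stmt_12 (u v : Fin 7 → ℕ) (hu : u 3 * u 4 * u 5 = 0) (hv : v 3 * v 4 * v 5 = 0) :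
    ∃ (S : Finset (Fin 7 → ℕ)) (C : (Fin 7 → ℕ) → ℤ),
      (∀ w ∈ S, w 3 * w 4 * w 5 = 0 ∧ wdeg w ≤ wdeg u + wdeg v) ∧
      (∏ i, X i ^ u i) * (∏ i, X i ^ v i) - ∑ w ∈ S, C w • ∏ i, X i ^ w i ∈
        Ideal.span {bpRel} := by
  set D := wdeg u + wdeg v with hD
  have hmem : mono (u + v) ∈ N D := by
    have := main ((u+v) 3 + (u+v) 4 + (u+v) 5) (u + v) le_rfl
    rwa [wdeg_add] at this
  rw [N, Submodule.mem_sup] at hmem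
  obtain ⟨q, hq, r, hr, hqr⟩ := hmem
  rw [Submodule.mem_span_set] at hq
  obtain ⟨c, hsupp, hsum⟩ := hq
  classical
  let f : MvPolynomial (Fin 7) ℤ → (Fin 7 → ℕ) := fun a =>
    if h : ∃ x, (x 3 * x 4 * x 5 = 0 ∧ wdeg x ≤ D) ∧ a = mono x then h.choose else 0
  have hf : ∀ a ∈ c.support, ((f a) 3 * (f a) 4 * (f a) 5 = 0 ∧ wdeg (f a) ≤ D)
      ∧ a = mono (f a) := by
    intro a ha
    have h : ∃ x, (x 3 * x 4 * x 5 = 0 ∧ wdeg x ≤ D) ∧ a = mono x := hsupp ha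
    have hfa : f a = h.choose := dif_pos h
    rw [hfa]
    exact h.choose_spec
  refine ⟨c.support.image f, fun w => c (mono w), ?_, ?_⟩
  · intro w hw
    rw [Finset.mem_image] at hw
    obtain ⟨a, ha, rfl⟩ := hw
    exact (hf a ha).1
  · have hinj : Set.InjOn f c.support := by
      intro a ha b hb hab
      rw [(hf a ha).2, (hf b hb).2, hab]
    have hsum2 : ∑ w ∈ c.support.image f, c (mono w) • mono w = q := by
      rw [Finset.sum_image hinj]
      rw [← hsum, Finsupp.sum]
      apply Finset.sum_congr rfl
      intro a ha
      rw [← (hf a ha).2]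
    have hlhs : (∏ i, X i ^ u i) * (∏ i, X i ^ v i) = mono (u + v) := (mono_add u v).symm
    have : (∏ i, X i ^ u i) * (∏ i, X i ^ v i)
        - ∑ w ∈ c.support.image f, c (mono w) • ∏ i, X i ^ w i = r := by
      rw [hlhs, ← hqr]
      have : ∑ w ∈ c.support.image f, c (mono w) • ∏ i, X i ^ w i
          = ∑ w ∈ c.support.image f, c (mono w) • mono w := rfl
      rw [this, hsum2]; ring
    rw [this]
    exact hr
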